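/- Let G and K be groups and consider G as a subgroup of the free product G ∗ K. Then G is malnormal in G ∗ K: for every z ∈ G ∗ K with z ∉ G, one has zGz⁻¹ ∩ G = {e}. -/

import Mathlib

/-!
Write `z⁻¹ = a t` with `a ∈ G` and `t` a reduced word whose first letter is not in `G`.
For `1 ≠ g ∈ G`, the element `z g z⁻¹ = t⁻¹ (a⁻¹ g a) t` is then spelled by the reduced word
`t⁻¹ · (a⁻¹ g a) · t`, of length at least three unless `t` is empty, whereas elements of `G` have
reduced length at most one. So `z g z⁻¹ ∈ G` forces `t` to be empty, i.e. `z ∈ G`.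
-/

namespace Subgroup

variable {H H' : Type*} [Group H] [Group H']

def IsMalnormal (Λ : Subgroup H) : Prop :=
  ∀ h ∉ Λ, Λ.map (MulAut.conj h).toMonoidHom ⊓ Λ = ⊥

theorem isMalnormal_iff {Λ : Subgroup H} :
    Λ.IsMalnormal ↔ ∀ h g, g ∈ Λ → g ≠ 1 → h * g * h⁻¹ ∈ Λ → h ∈ Λ := by
  simp only [IsMalnormal, eq_bot_iff, SetLike.le_def, mem_inf, mem_map, mem_bot]
  constructor
  · intro hΛ h g hg hg1 hconj
    by_contra hh
    exact hg1 (by simpa using hΛ h hh ⟨⟨g, hg, rfl⟩, hconj⟩)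
  · rintro hΛ h hh x ⟨⟨g, hg, rfl⟩, hconj⟩
    by_contra hg1
    exact hh (hΛ h g hg (by simpa using hg1) hconj)

theorem IsMalnormal.comap {Λ : Subgroup H'} (hΛ : Λ.IsMalnormal) {f : H →* H'}
    (hf : Function.Injective f) : (Λ.comap f).IsMalnormal := by
  rw [isMalnormal_iff] at hΛ ⊢
  intro h g hg hg1 hconj
  exact hΛ (f h) (f g) hg ((map_ne_one_iff f hf).mpr hg1) (by simpa using hconj)

end Subgroup

namespace Monoid.CoprodI

namespace Word

variable {ι : Type*} {M : ι → Type*} [∀ i, Monoid (M i)]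

theorem exists_eq_of_mul_prod [DecidableEq ι] [∀ i, DecidableEq (M i)] (i : ι) (x : CoprodI M) :
    ∃ (a : M i) (t : Word M), t.fstIdx ≠ some i ∧ x = of a * t.prod := by
  refine ⟨(equivPair i (equiv x)).head, (equivPair i (equiv x)).tail,
    (equivPair i (equiv x)).fstIdx_ne, ?_⟩
  rw [← prod_smul, equivPair_head_smul_equivPair_tail]
  exact (equiv.symm_apply_apply x).symm

theorem length_toList_equiv_of_le_one [DecidableEq ι] [∀ i, DecidableEq (M i)] {i : ι} (m : M i) :
    (equiv (of m)).toList.length ≤ 1 := by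
  change (of m • empty).toList.length ≤ 1
  rw [of_smul_def, equivPair_eq_of_fstIdx_ne (by simp [fstIdx, empty])]
  unfold rcons
  split <;> simp [empty]

variable {G : ι → Type*} [∀ i, Group (G i)]

theorem eq_empty_of_inv_prod_mul_of_mul_prod_eq_of [DecidableEq ι] [∀ i, DecidableEq (G i)]
    {i : ι} {t : Word G} (ht : t.fstIdx ≠ some i) {g h : G i} (hg : g ≠ 1)
    (heq : t.prod⁻¹ * of g * t.prod = of h) : t = empty := by
  by_contra hne
  -- `t⁻¹ g t` is reduced as written, since `t` does not begin with a letter of `G i`.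
  obtain ⟨j, k, w, rfl⟩ := NeWord.of_word t hne
  have hji : j ≠ i := fun hji => ht (by simp [fstIdx, NeWord.toWord, hji])
  let W := (w.inv.append hji (NeWord.singleton g hg)).append hji.symm w
  have hW : equiv (of h) = W.toWord := by
    rw [← heq, ← equiv.apply_symm_apply W.toWord]
    change _ = equiv W.prod
    simp only [W, NeWord.append_prod, NeWord.inv_prod, NeWord.prod_singleton]
    rfl
  have hlen : W.toWord.toList.length ≤ 1 := hW ▸ length_toList_equiv_of_le_one h
  have hw : 0 < w.toList.length := List.length_pos_iff.mpr w.toList_ne_nil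
  simp only [W, NeWord.toWord, NeWord.toList, List.length_append, List.length_singleton] at hlen
  omega

end Word

theorem isMalnormal_range_of {ι : Type*} {G : ι → Type*} [∀ i, Group (G i)] (i : ι) :
    (of : G i →* CoprodI G).range.IsMalnormal := by
  classical
  rw [Subgroup.isMalnormal_iff]
  rintro x _ ⟨g, rfl⟩ hg ⟨h, hconj⟩
  obtain ⟨a, t, ht, hx⟩ := Word.exists_eq_of_mul_prod i x⁻¹
  rw [inv_eq_iff_eq_inv] at hx
  have hconj_t : t.prod⁻¹ * of (a⁻¹ * g * a) * t.prod = of h := by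
    rw [hconj, hx]
    simp only [mul_inv_rev, inv_inv, map_mul, map_inv, mul_assoc]
  have hg' : a⁻¹ * g * a ≠ 1 := by
    rwa [Ne, mul_assoc, inv_mul_eq_one, eq_comm, mul_eq_right, ← (of_injective i).eq_iff, map_one]
  rw [Word.eq_empty_of_inv_prod_mul_of_mul_prod_eq_of ht hg' hconj_t, Word.prod_empty] at hx
  exact ⟨a⁻¹, by simp [hx]⟩

end Monoid.CoprodI

namespace Monoid.Coprod

universe u v

variable (G : Type u) (K : Type v) [Group G] [Group K]

/-- Reduced words are available only for indexed free products (`Monoid.CoprodI`), so `G ∗ K` is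
embedded into the free product of this family, lifted to a common universe. -/
abbrev boolFamily : Bool → Type max u v
  | true => ULift.{v} G
  | false => ULift.{u} K

instance : ∀ b, Group (boolFamily G K b)
  | true => inferInstanceAs (Group (ULift G))
  | false => inferInstanceAs (Group (ULift K))

def toCoprodI : G ∗ K →* CoprodI (boolFamily G K) :=
  lift ((CoprodI.of (i := true)).comp MulEquiv.ulift.symm.toMonoidHom)
    ((CoprodI.of (i := false)).comp MulEquiv.ulift.symm.toMonoidHom)

def ofCoprodI : CoprodI (boolFamily G K) →* G ∗ K :=
  CoprodI.lift fun
    | true => inl.comp MulEquiv.ulift.toMonoidHom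
    | false => inr.comp MulEquiv.ulift.toMonoidHom

variable {G K}

theorem toCoprodI_inl (g : G) : toCoprodI G K (inl g) = CoprodI.of (i := true) (ULift.up g) :=
  lift_apply_inl _ _ g

theorem ofCoprodI_comp_toCoprodI : (ofCoprodI G K).comp (toCoprodI G K) = .id _ := by
  ext <;> simp [toCoprodI, ofCoprodI]

theorem toCoprodI_injective : Function.Injective (toCoprodI G K) :=
  Function.LeftInverse.injective (g := ofCoprodI G K) (DFunLike.congr_fun ofCoprodI_comp_toCoprodI)

theorem range_inl_eq_comap_toCoprodI :
    (inl : G →* G ∗ K).range = (CoprodI.of (i := true)).range.comap (toCoprodI G K) := by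
  ext z
  refine ⟨fun ⟨g, hg⟩ => ⟨ULift.up g, by rw [← hg, toCoprodI_inl]⟩, fun ⟨g, hg⟩ => ⟨g.down, ?_⟩⟩
  exact toCoprodI_injective (by rw [toCoprodI_inl, ← hg])

theorem isMalnormal_range_inl : (inl : G →* G ∗ K).range.IsMalnormal := by
  rw [range_inl_eq_comap_toCoprodI]
  exact (CoprodI.isMalnormal_range_of true).comap toCoprodI_injective

end Monoid.Coprod

/-- `G` is a malnormal subgroup of the free product `G ∗ K`:
for every `z ∈ G ∗ K` with `z ∉ G`, we have `z G z⁻¹ ∩ G = {e}`. -/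
theorem stmt1 {G K : Type*} [Group G] [Group K] (z : Monoid.Coprod G K)
    (hz : z ∉ (Monoid.Coprod.inl : G →* Monoid.Coprod G K).range) :
    ((Monoid.Coprod.inl : G →* Monoid.Coprod G K).range.map (MulAut.conj z).toMonoidHom ⊓
        (Monoid.Coprod.inl : G →* Monoid.Coprod G K).range) = ⊥ :=
  Monoid.Coprod.isMalnormal_range_inl z hz
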